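/- arXiv:1512.05529 — 7 statements merged into one kernel-verified Lean document; each statement's English description precedes it below -/
import Mathlib

section
/- If K is a C*-convex subset of the n×n Hermitian matrices and X ∈ K, then for every eigenvalue λ of X, the scalar matrix λI belongs to K. -/
/-!
Let `v` be a unit eigenvector of `X` for `λ`, and let `Cₖ` be the matrix whose `k`-th column is
`v` and whose other columns vanish. Then `Cₖ* A Cₖ = (v* A v) Eₖₖ` for every `A`, so
`∑ₖ Cₖ* Cₖ = (v* v) I = I` and `∑ₖ Cₖ* X Cₖ = (v* X v) I = λ I`, which lies in `K` by C*-convexity.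
-/

noncomputable section

/-- C*-convexity for a set of n×n complex matrices. -/
def MatCstarConvex {n : ℕ} (K : Set (Matrix (Fin n) (Fin n) ℂ)) : Prop :=
  ∀ (m : ℕ) (X C : Fin m → Matrix (Fin n) (Fin n) ℂ),
    (∀ i, X i ∈ K) → ∑ i, star (C i) * C i = 1 →
      ∑ i, star (C i) * X i * C i ∈ K

open Matrix

namespace Matrix

theorem star_vecMulVec_single_mul_mul {R ι : Type*} [CommSemiring R] [StarRing R]
    [Fintype ι] [DecidableEq ι] (v : ι → R) (A : Matrix ι ι R) (k : ι) :
    star (vecMulVec v (Pi.single k 1)) * A * vecMulVec v (Pi.single k 1) =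
      (star v ⬝ᵥ A *ᵥ v) • single k k 1 := by
  rw [star_eq_conjTranspose, conjTranspose_vecMulVec, vecMulVec_mul, vecMulVec_mul_vecMulVec,
    vecMulVec_smul, single_eq_single_vecMulVec_single, dotProduct_mulVec, Pi.star_single, star_one]

theorem sum_star_vecMulVec_single_mul_mul {R ι : Type*} [CommSemiring R] [StarRing R]
    [Fintype ι] [DecidableEq ι] (v : ι → R) (A : Matrix ι ι R) :
    ∑ k, star (vecMulVec v (Pi.single k 1)) * A * vecMulVec v (Pi.single k 1) =
      (star v ⬝ᵥ A *ᵥ v) • (1 : Matrix ι ι R) := by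
  simp only [star_vecMulVec_single_mul_mul, ← Finset.smul_sum, sum_single_one]

namespace IsHermitian

variable {𝕜 ι : Type*} [RCLike 𝕜] [Fintype ι] [DecidableEq ι] {A : Matrix ι ι 𝕜}

theorem star_eigenvectorBasis_dotProduct_self (hA : A.IsHermitian) (i : ι) :
    star ⇑(hA.eigenvectorBasis i) ⬝ᵥ ⇑(hA.eigenvectorBasis i) = 1 := by
  rw [dotProduct_comm, ← EuclideanSpace.inner_eq_star_dotProduct, inner_self_eq_norm_sq_to_K,
    hA.eigenvectorBasis.orthonormal.1 i, RCLike.ofReal_one, one_pow]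

theorem star_eigenvectorBasis_dotProduct_mulVec (hA : A.IsHermitian) (i : ι) :
    star ⇑(hA.eigenvectorBasis i) ⬝ᵥ A *ᵥ ⇑(hA.eigenvectorBasis i) = hA.eigenvalues i := by
  rw [mulVec_eigenvectorBasis, dotProduct_smul, star_eigenvectorBasis_dotProduct_self,
    RCLike.real_smul_eq_coe_mul, mul_one]

end IsHermitian

end Matrix

theorem eigenvalue_smul_one_mem_of_cstarConvex_general {n : ℕ}
    (K : Set (Matrix (Fin n) (Fin n) ℂ))
    (hK : MatCstarConvex K) (X : Matrix (Fin n) (Fin n) ℂ) (hX : X ∈ K)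
    (hXh : X.IsHermitian) (i : Fin n) :
    ((hXh.eigenvalues i : ℂ) • (1 : Matrix (Fin n) (Fin n) ℂ)) ∈ K := by
  let C : Fin n → Matrix (Fin n) (Fin n) ℂ :=
    fun k => vecMulVec ⇑(hXh.eigenvectorBasis i) (Pi.single k 1)
  have hC : ∑ k, star (C k) * C k = 1 := by
    have h := sum_star_vecMulVec_single_mul_mul (⇑(hXh.eigenvectorBasis i)) 1
    simp only [mul_one, one_mulVec, hXh.star_eigenvectorBasis_dotProduct_self, one_smul] at h
    exact h
  have hmem := hK n (fun _ => X) C (fun _ => hX) hC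
  rwa [sum_star_vecMulVec_single_mul_mul, hXh.star_eigenvectorBasis_dotProduct_mulVec] at hmem

/-- If K is a C*-convex set of Hermitian matrices and X ∈ K, then every
eigenvalue of X, as a scalar matrix, belongs to K. -/
theorem eigenvalue_smul_one_mem_of_cstarConvex {n : ℕ}
    (K : Set (Matrix (Fin n) (Fin n) ℂ)) (hherm : ∀ X ∈ K, X.IsHermitian)
    (hK : MatCstarConvex K) (X : Matrix (Fin n) (Fin n) ℂ) (hX : X ∈ K)
    (hXh : X.IsHermitian) (i : Fin n) :
    ((hXh.eigenvalues i : ℂ) • (1 : Matrix (Fin n) (Fin n) ℂ)) ∈ K :=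
  eigenvalue_smul_one_mem_of_cstarConvex_general K hK X hX hXh i
end
end

section
/- A set K ⊆ ℍₙ is C*-convex if and only if for every finite family X₁,...,Xₘ ∈ K and every family Φ₁,...,Φₘ of positive linear maps on Mₙ(ℂ) with Σᵢ Φᵢ(I) = I, one has Σᵢ Φᵢ(Xᵢ) ∈ K. -/
/-! A conjugation `A ↦ C* A C` is a positive map, which gives one direction. Conversely, a
positive map `Φ` agrees on a Hermitian `X` and on `1` with a sum of conjugations: diagonalize
`X = U D U*` and write `Φ (U Eₖₖ U*) = Bₖ* Bₖ` (positivity); then `Cₖⱼ = U Eₖⱼ Bₖ` satisfies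
`∑ⱼ Cₖⱼ* Y Cₖⱼ = (U* Y U)ₖₖ • Φ (U Eₖₖ U*)`, and summing over `k` gives `Φ Y` whenever
`U* Y U` is diagonal. Flattening the indices `(i, k, j)` turns `∑ᵢ Φᵢ (Xᵢ)` into a single
C*-convex combination. -/

noncomputable section
open scoped ComplexOrder

open scoped MatrixOrder
open Matrix

namespace Matrix

variable {m : Type*} [Fintype m] [DecidableEq m]

lemma sum_star_mul_mul_conj_single {R : Type*} [CommSemiring R] [StarRing R]
    (U B Y : Matrix m m R) (k : m) :
    ∑ j, star (U * single k j 1 * B) * Y * (U * single k j 1 * B) =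
      (star U * Y * U) k k • (star B * B) := by
  have hterm : ∀ j, star (U * single k j 1 * B) * Y * (U * single k j 1 * B) =
      star B * single j j ((star U * Y * U) k k) * B := fun j => by
    calc _ = star B * (single j k 1 * (star U * Y * U) * single k j 1) * B := by
          simp only [star_mul, star_eq_conjTranspose, conjTranspose_single, star_one,
            Matrix.mul_assoc]
      _ = _ := by rw [single_mul_mul_single, one_mul, mul_one]
  rw [Finset.sum_congr rfl fun j _ => hterm j, ← Finset.sum_mul, ← Finset.mul_sum,
    sum_single_eq_diagonal, ← smul_one_eq_diagonal, Matrix.mul_smul, Matrix.smul_mul,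
    Matrix.mul_one]

variable {𝕜 : Type*} [RCLike 𝕜]

lemma exists_sum_conj_eq_map_conj_diagonal (Φ : Matrix m m 𝕜 →ₗ[𝕜] Matrix m m 𝕜)
    (hΦ : ∀ A, A.PosSemidef → (Φ A).PosSemidef) {U : Matrix m m 𝕜}
    (hU : star U * U = 1) :
    ∃ C : m × m → Matrix m m 𝕜, ∀ d : m → 𝕜,
      ∑ p, star (C p) * (U * diagonal d * star U) * C p = Φ (U * diagonal d * star U) := by
  have hpos : ∀ k, (Φ (U * single k k 1 * star U)).PosSemidef := fun k => by
    refine hΦ _ ?_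
    have := (posSemidef_conjTranspose_mul_self (single k k (1 : 𝕜))).mul_mul_conjTranspose_same U
    simpa [conjTranspose_single, star_eq_conjTranspose] using this
  choose B hB using fun k => CStarAlgebra.nonneg_iff_eq_star_mul_self.mp (hpos k).nonneg
  refine ⟨fun p => U * single p.1 p.2 1 * B p.1, fun d => ?_⟩
  have hdiag : star U * (U * diagonal d * star U) * U = diagonal d := by
    calc _ = (star U * U) * diagonal d * (star U * U) := by simp only [Matrix.mul_assoc]
      _ = _ := by rw [hU, Matrix.one_mul, Matrix.mul_one]
  calc _ = ∑ k, d k • Φ (U * single k k 1 * star U) := by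
        rw [Fintype.sum_prod_type]
        simp only [sum_star_mul_mul_conj_single, hdiag, diagonal_apply_eq, hB]
    _ = Φ (∑ k, U * single k k (d k) * star U) := by
        rw [map_sum]
        refine Finset.sum_congr rfl fun k _ => ?_
        rw [← map_smul, ← Matrix.smul_mul, ← Matrix.mul_smul, smul_single, smul_eq_mul, mul_one]
    _ = _ := by rw [← Finset.sum_mul, ← Finset.mul_sum, sum_single_eq_diagonal]

lemma IsHermitian.exists_sum_conj_eq_map {X : Matrix m m 𝕜} (hX : X.IsHermitian)
    (Φ : Matrix m m 𝕜 →ₗ[𝕜] Matrix m m 𝕜) (hΦ : ∀ A, A.PosSemidef → (Φ A).PosSemidef) :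
    ∃ C : m × m → Matrix m m 𝕜,
      ∑ p, star (C p) * C p = Φ 1 ∧ ∑ p, star (C p) * X * C p = Φ X := by
  obtain ⟨C, hC⟩ := exists_sum_conj_eq_map_conj_diagonal Φ hΦ
    ((mem_unitaryGroup_iff').mp hX.eigenvectorUnitary.2)
  have hX_eq : (hX.eigenvectorUnitary : Matrix m m 𝕜) * diagonal (RCLike.ofReal ∘ hX.eigenvalues) *
      star (hX.eigenvectorUnitary : Matrix m m 𝕜) = X := by
    conv_rhs => rw [hX.spectral_theorem, Unitary.conjStarAlgAut_apply]
  have h_one : (hX.eigenvectorUnitary : Matrix m m 𝕜) * diagonal (fun _ => 1) *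
      star (hX.eigenvectorUnitary : Matrix m m 𝕜) = 1 := by
    rw [diagonal_one, Matrix.mul_one, (mem_unitaryGroup_iff).mp hX.eigenvectorUnitary.2]
  refine ⟨C, ?_, ?_⟩
  · simpa only [h_one, Matrix.mul_one] using hC fun _ => 1
  · simpa only [hX_eq] using hC (RCLike.ofReal ∘ hX.eigenvalues)

end Matrix

lemma MatCstarConvex.sum_mem {n : ℕ} {K : Set (Matrix (Fin n) (Fin n) ℂ)} (hK : MatCstarConvex K)
    {ι : Type*} [Fintype ι] (X C : ι → Matrix (Fin n) (Fin n) ℂ) (hX : ∀ i, X i ∈ K)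
    (hC : ∑ i, star (C i) * C i = 1) : ∑ i, star (C i) * X i * C i ∈ K := by
  let e := (Fintype.equivFin ι).symm
  rw [← e.sum_comp] at hC ⊢
  exact hK _ (X ∘ e) (C ∘ e) (fun _ => hX _) hC

/-- A set of Hermitian matrices is C*-convex iff it is closed under sums
Σᵢ Φᵢ(Xᵢ) for unital families of positive linear maps Φᵢ. -/
theorem matCstarConvex_iff_closed_under_positive_maps {n : ℕ}
    (K : Set (Matrix (Fin n) (Fin n) ℂ)) (hherm : ∀ X ∈ K, X.IsHermitian) :
    MatCstarConvex K ↔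
      ∀ (m : ℕ) (X : Fin m → Matrix (Fin n) (Fin n) ℂ)
        (Φ : Fin m → Matrix (Fin n) (Fin n) ℂ →ₗ[ℂ] Matrix (Fin n) (Fin n) ℂ),
        (∀ i, X i ∈ K) →
        (∀ i, ∀ A : Matrix (Fin n) (Fin n) ℂ, A.PosSemidef → (Φ i A).PosSemidef) →
        ∑ i, Φ i 1 = 1 →
        ∑ i, Φ i (X i) ∈ K := by
  constructor
  · intro hK m X Φ hX hΦ hΦ_unital
    choose C hC_one hC_X using fun i => (hherm _ (hX i)).exists_sum_conj_eq_map (Φ i) (hΦ i)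
    have hC : ∑ q : Fin m × (Fin n × Fin n), star (C q.1 q.2) * C q.1 q.2 = 1 := by
      rw [Fintype.sum_prod_type]
      simpa only [hC_one] using hΦ_unital
    simpa only [Fintype.sum_prod_type, hC_X] using
      hK.sum_mem (ι := Fin m × (Fin n × Fin n)) (fun q => X q.1) (fun q => C q.1 q.2)
        (fun _ => hX _) hC
  · intro h m X C hX hC
    have hpos : ∀ i, ∀ A : Matrix (Fin n) (Fin n) ℂ, A.PosSemidef →
        (LinearMap.mulLeftRight ℂ (star (C i), C i) A).PosSemidef := fun i A hA => by
      simpa only [LinearMap.mulLeftRight_apply, star_eq_conjTranspose] using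
        hA.conjTranspose_mul_mul_same (C i)
    simpa only [LinearMap.mulLeftRight_apply, Matrix.mul_one] using
      h m X (fun i => LinearMap.mulLeftRight ℂ (star (C i), C i)) hX hpos
        (by simpa only [LinearMap.mulLeftRight_apply, Matrix.mul_one] using hC)
end
end

section
/- For a scalar M > 0, the set {X ∈ B(H) : 0 < X ≤ M·I} is C*-log-convex. -/
noncomputable section

/-- A subset of B(H) is C*-convex if it is closed under C*-convex combinations. -/
def CstarConvex {H : Type*} [NormedAddCommGroup H] [InnerProductSpace ℂ H]
    [CompleteSpace H] (K : Set (H →L[ℂ] H)) : Prop :=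
  ∀ (n : ℕ) (X C : Fin n → H →L[ℂ] H),
    (∀ i, X i ∈ K) → ∑ i, star (C i) * C i = 1 →
      ∑ i, star (C i) * X i * C i ∈ K

/-- A subset of B(H) is C*-log-convex if it is closed under harmonic
C*-convex combinations (Σᵢ Cᵢ* Xᵢ⁻¹ Cᵢ)⁻¹. -/
def CstarLogConvex {H : Type*} [NormedAddCommGroup H] [InnerProductSpace ℂ H]
    [CompleteSpace H] (K : Set (H →L[ℂ] H)) : Prop :=
  ∀ (n : ℕ) (X C : Fin n → H →L[ℂ] H),
    (∀ i, X i ∈ K) → ∑ i, star (C i) * C i = 1 →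
      Ring.inverse (∑ i, star (C i) * Ring.inverse (X i) * C i) ∈ K

/-! Inversion is antitone on strictly positive elements, so `Xᵢ ≤ M` gives `Xᵢ⁻¹ ≥ M⁻¹`.
Conjugating by the `Cᵢ` and summing, with `∑ Cᵢ* Cᵢ = 1`, gives `∑ Cᵢ* Xᵢ⁻¹ Cᵢ ≥ M⁻¹`; hence this
sum is strictly positive and its inverse is at most `M`. -/

open Ring

lemma Ring.inverse_smul_one {𝕜 A : Type*} [Field 𝕜] [Ring A] [Algebra 𝕜 A] {c : 𝕜} (hc : c ≠ 0) :
    (c • (1 : A))⁻¹ʳ = c⁻¹ • 1 := by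
  simpa [Algebra.algebraMap_eq_smul_one] using
    Ring.inverse_unit (Units.map (algebraMap 𝕜 A).toMonoidHom (Units.mk0 c hc))

lemma smul_one_le_sum_star_mul_mul {R A ι : Type*} [Semiring A] [StarRing A] [PartialOrder A]
    [StarOrderedRing A] [Monoid R] [DistribMulAction R A] [IsScalarTower R A A]
    [SMulCommClass R A A] [Fintype ι] {c : R} {Y C : ι → A} (hC : ∑ i, star (C i) * C i = 1)
    (hY : ∀ i, c • 1 ≤ Y i) :
    c • 1 ≤ ∑ i, star (C i) * Y i * C i :=
  calc c • (1 : A) = c • ∑ i, star (C i) * C i := by rw [hC]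
    _ = ∑ i, star (C i) * (c • 1) * C i := by
        simp only [Finset.smul_sum, mul_smul_comm, smul_mul_assoc, mul_one]
    _ ≤ ∑ i, star (C i) * Y i * C i :=
        Finset.sum_le_sum fun i _ => star_left_conjugate_le_conjugate (hY i) (C i)

lemma inv_smul_one_le_sum_star_mul_ringInverse_mul {A ι : Type*} [CStarAlgebra A] [PartialOrder A]
    [StarOrderedRing A] [Fintype ι] {c : ℝ} (hc : 0 < c)
    {X C : ι → A} (hX : ∀ i, IsStrictlyPositive (X i)) (hXc : ∀ i, X i ≤ c • 1)
    (hC : ∑ i, star (C i) * C i = 1) :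
    c⁻¹ • 1 ≤ ∑ i, star (C i) * (X i)⁻¹ʳ * C i :=
  smul_one_le_sum_star_mul_mul hC fun i => by
    simpa [Ring.inverse_smul_one hc.ne'] using
      CStarAlgebra.ringInverse_le_ringInverse (hXc i) (hX i)

/-- For M > 0, the set {X : 0 < X ≤ M·I} is C*-log-convex. -/
theorem cstarLogConvex_interval {H : Type*} [NormedAddCommGroup H]
    [InnerProductSpace ℂ H] [CompleteSpace H] (M : ℝ) (hM : 0 < M) :
    CstarLogConvex {X : H →L[ℂ] H | 0 ≤ X ∧ IsUnit X ∧ X ≤ M • (1 : H →L[ℂ] H)} := by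
  intro n X C hX hC
  have hXpos (i : Fin n) : IsStrictlyPositive (X i) :=
    IsStrictlyPositive.iff_of_unital.mpr ⟨(hX i).1, (hX i).2.1⟩
  have hS := inv_smul_one_le_sum_star_mul_ringInverse_mul hM hXpos (fun i => (hX i).2.2) hC
  have hMinv : IsStrictlyPositive (M⁻¹ • (1 : H →L[ℂ] H)) :=
    isStrictlyPositive_one.smul (inv_pos.2 hM)
  have hSinv := (hMinv.of_le hS).ringInverse
  refine ⟨hSinv.nonneg, hSinv.isUnit, ?_⟩
  simpa [Ring.inverse_smul_one (inv_ne_zero hM.ne')] using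
    CStarAlgebra.ringInverse_le_ringInverse hS hMinv
end
end

section
/- If K ⊆ B(H) is C*-log-convex, then K⁻¹ = {X⁻¹ : X ∈ K} is convex: for X, Y ∈ K⁻¹ and λ ∈ [0,1], λX + (1-λ)Y ∈ K⁻¹. -/
noncomputable section

/-- If K is C*-log-convex, then K⁻¹ = {X⁻¹ : X ∈ K} is convex. -/
theorem inv_convex_of_cstarLogConvex {H : Type*} [NormedAddCommGroup H]
    [InnerProductSpace ℂ H] [CompleteSpace H] (K : Set (H →L[ℂ] H))
    (hpos : ∀ X ∈ K, 0 ≤ X ∧ IsUnit X) (hK : CstarLogConvex K) :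
    ∀ X ∈ Ring.inverse '' K, ∀ Y ∈ Ring.inverse '' K, ∀ l : ℝ,
      l ∈ Set.Icc (0 : ℝ) 1 → l • X + (1 - l) • Y ∈ Ring.inverse '' K := by
  rintro X ⟨A, hA, rfl⟩ Y ⟨B, hB, rfl⟩ l ⟨hl0, hl1⟩
  set c0 : ℂ := ((Real.sqrt l : ℝ) : ℂ) with hc0def
  set c1 : ℂ := ((Real.sqrt (1 - l) : ℝ) : ℂ) with hc1def
  set Xs : Fin 2 → (H →L[ℂ] H) := ![A, B] with hXs
  set C : Fin 2 → (H →L[ℂ] H) := ![c0 • 1, c1 • 1] with hC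
  have hmem : ∀ i, Xs i ∈ K := by
    intro i; fin_cases i <;> simpa [hXs]
  have hc0sq : c0 * c0 = (l : ℂ) := by
    rw [hc0def, ← Complex.ofReal_mul, Real.mul_self_sqrt hl0]
  have hc1sq : c1 * c1 = ((1 - l : ℝ) : ℂ) := by
    rw [hc1def, ← Complex.ofReal_mul, Real.mul_self_sqrt (by linarith)]
  have hstar0 : star c0 = c0 := by simp [hc0def]
  have hstar1 : star c1 = c1 := by simp [hc1def]
  have hCsum : ∑ i, star (C i) * C i = 1 := by
    simp only [hC, Fin.sum_univ_two, Matrix.cons_val_zero, Matrix.cons_val_one,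
      Matrix.head_cons, star_smul, star_one, smul_mul_smul_comm, hstar0, hstar1,
      hc0sq, hc1sq, one_mul, ← add_smul, ← Complex.ofReal_add]
    norm_num
  have hS : ∑ i, star (C i) * Ring.inverse (Xs i) * C i
      = l • Ring.inverse A + (1 - l) • Ring.inverse B := by
    simp only [hC, hXs, Fin.sum_univ_two, Matrix.cons_val_zero, Matrix.cons_val_one,
      Matrix.head_cons, star_smul, star_one, smul_mul_assoc, mul_smul_comm,
      hstar0, hstar1, one_mul, mul_one, smul_smul, hc0sq, hc1sq]
    rw [Complex.coe_smul, Complex.coe_smul]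
  have hZ := hK 2 Xs C hmem hCsum
  rw [hS] at hZ
  set S : H →L[ℂ] H := l • Ring.inverse A + (1 - l) • Ring.inverse B with hSdef
  have hU : IsUnit (Ring.inverse S) := (hpos _ hZ).2
  by_cases hS' : IsUnit S
  · obtain ⟨u, hu⟩ := hS'
    refine ⟨Ring.inverse S, hZ, ?_⟩
    rw [← hu, Ring.inverse_unit, Ring.inverse_unit]
    simp
  · exfalso
    rw [Ring.inverse_non_unit _ hS'] at hU
    have h01 : (0 : H →L[ℂ] H) = 1 := isUnit_zero_iff.mp hU
    have := subsingleton_of_zero_eq_one h01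
    exact hS' ⟨⟨S, S, Subsingleton.elim _ _, Subsingleton.elim _ _⟩, rfl⟩
end
end

section
/- Let K ⊆ B(H) be a set of positive invertible operators that is inverse closed (K⁻¹ ⊆ K). If K is C*-log-convex, then K is C*-convex. -/
noncomputable section

/-- If K consists of positive invertible operators, is inverse closed and
C*-log-convex, then K is C*-convex. -/
theorem cstarConvex_of_cstarLogConvex_inv_closed {H : Type*} [NormedAddCommGroup H]
    [InnerProductSpace ℂ H] [CompleteSpace H] (K : Set (H →L[ℂ] H))
    (hpos : ∀ X ∈ K, 0 ≤ X ∧ IsUnit X) (hinv : Ring.inverse '' K ⊆ K)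
    (hK : CstarLogConvex K) : CstarConvex K := by
  intro n X C hX hsum
  set Y : Fin n → H →L[ℂ] H := fun i => Ring.inverse (X i) with hY
  have hYK : ∀ i, Y i ∈ K := fun i => hinv ⟨X i, hX i, rfl⟩
  have hmem := hK n Y C hYK hsum
  have hYX : ∀ i, Ring.inverse (Y i) = X i := by
    intro i
    obtain ⟨u, hu⟩ := (hpos _ (hX i)).2
    simp [hY, ← hu, Ring.inverse_unit]
  simp only [hYX] at hmem
  set S := ∑ i, star (C i) * X i * C i with hS
  by_cases hu : IsUnit S
  · obtain ⟨u, hu⟩ := hu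
    have : Ring.inverse (Ring.inverse S) = S := by
      simp [← hu, Ring.inverse_unit]
    have := hinv ⟨Ring.inverse S, hmem, this⟩
    exact this
  · have h0 : Ring.inverse S = 0 := Ring.inverse_non_unit _ hu
    rw [h0] at hmem
    have hzu : IsUnit (0 : H →L[ℂ] H) := (hpos _ hmem).2
    have h01 : (0 : H →L[ℂ] H) = 1 := isUnit_zero_iff.mp hzu
    have : S = 0 := by
      calc S = S * 1 := (mul_one S).symm
        _ = S * 0 := by rw [h01]
        _ = 0 := mul_zero S
    rw [this]
    exact hmem
end
end

section
/- Let T ∈ ℍₙ have eigenvalues λ₁,...,λₙ (with multiplicity). Then the C*-convex hull of {T} equals {Σᵢ₌₁ⁿ λᵢEᵢ : Eᵢ ≥ 0, Σᵢ₌₁ⁿ Eᵢ = I}. -/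
/-!
Write `T = ∑ⱼ λⱼ Pⱼ` with `Pⱼ` the rank-one projections onto an orthonormal eigenbasis. A
C*-convex combination `∑ᵢ Cᵢᴴ T Cᵢ` is then `∑ⱼ λⱼ Eⱼ` with `Eⱼ = ∑ᵢ Cᵢᴴ Pⱼ Cᵢ`. Conversely,
compressing `T` to its `j`-th eigenvector shows `λⱼ • 1` lies in the C*-convex hull of `T`, and
that hull is itself C*-convex, so it contains `∑ⱼ λⱼ Eⱼ = ∑ⱼ √Eⱼ (λⱼ • 1) √Eⱼ`.
-/

noncomputable section
open scoped ComplexOrder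

namespace Matrix

variable {n : Type*} [Fintype n] [DecidableEq n]

section StarRing

variable {R : Type*} [Semiring R] [StarRing R]

def cstarConvexHull (T : Matrix n n R) : Set (Matrix n n R) :=
  {X | ∃ (m : ℕ) (C : Fin m → Matrix n n R),
    ∑ i, star (C i) * C i = 1 ∧ X = ∑ i, star (C i) * T * C i}

variable {T : Matrix n n R}

theorem sum_star_mul_mul_mem_cstarConvexHull {ι : Type*} [Fintype ι] (C : ι → Matrix n n R)
    (hC : ∑ i, star (C i) * C i = 1) : ∑ i, star (C i) * T * C i ∈ cstarConvexHull T := by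
  let e := Fintype.equivFin ι
  refine ⟨Fintype.card ι, C ∘ e.symm, ?_, ?_⟩
  · rwa [Function.comp_def, e.symm.sum_comp (fun i => star (C i) * C i)]
  · rw [Function.comp_def, e.symm.sum_comp (fun i => star (C i) * T * C i)]

theorem sum_star_mul_mul_mem_cstarConvexHull_of_mem {ι : Type*} [Fintype ι]
    (B X : ι → Matrix n n R) (hB : ∑ j, star (B j) * B j = 1)
    (hX : ∀ j, X j ∈ cstarConvexHull T) : ∑ j, star (B j) * X j * B j ∈ cstarConvexHull T := by
  choose m C hC hXC using hX
  have conj_sum (j : ι) (Y : Matrix n n R) :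
      ∑ i, star (C j i * B j) * Y * (C j i * B j) =
        star (B j) * (∑ i, star (C j i) * Y * C j i) * B j := by
    simp only [star_mul, Finset.mul_sum, Finset.sum_mul, mul_assoc]
  have hCB : ∑ p : Σ j, Fin (m j), star (C p.1 p.2 * B p.1) * (C p.1 p.2 * B p.1) = 1 := by
    calc _ = ∑ j, ∑ i, star (C j i * B j) * 1 * (C j i * B j) := by
          simp only [Fintype.sum_sigma, mul_one]
      _ = 1 := by simp only [conj_sum]; simpa only [mul_one, hC] using hB
  simpa only [Fintype.sum_sigma, conj_sum, ← hXC] using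
    sum_star_mul_mul_mem_cstarConvexHull (T := T) _ hCB

theorem diag_smul_one_mem_cstarConvexHull (V : Matrix n n R) (j : n)
    (hV : (star V * V) j j = 1) :
    (star V * T * V) j j • (1 : Matrix n n R) ∈ cstarConvexHull T := by
  -- `V * single j k 1` maps `eₖ` to the `j`-th column of `V` and kills the other basis vectors.
  have compress (Y : Matrix n n R) :
      ∑ k, star (V * single j k 1) * Y * (V * single j k 1) = (star V * Y * V) j j • 1 := by
    have (k : n) : star (V * single j k 1) * Y * (V * single j k 1) =
        single k k ((star V * Y * V) j j) := by
      rw [star_mul, star_eq_conjTranspose (single j k 1), conjTranspose_single, star_one]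
      simpa only [mul_assoc, one_mul, mul_one] using
        single_mul_mul_single k j j k (1 : R) (star V * Y * V) 1
    simp only [this, sum_single_eq_diagonal, smul_one_eq_diagonal]
  rw [← compress]
  exact sum_star_mul_mul_mem_cstarConvexHull _ (by simpa [hV] using compress 1)

end StarRing

theorem mul_diagonal_mul_eq_sum_smul {R : Type*} [CommSemiring R] (U W : Matrix n n R)
    (d : n → R) : U * diagonal d * W = ∑ j, d j • (U * single j j 1 * W) := by
  rw [← sum_single_eq_diagonal, Finset.mul_sum, Finset.sum_mul]
  refine Finset.sum_congr rfl fun j _ => ?_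
  rw [← smul_mul_assoc, ← mul_smul_comm, smul_single, smul_eq_mul, mul_one]

theorem exists_posSemidef_of_mem_cstarConvexHull {R : Type*} [CommRing R] [PartialOrder R]
    [StarRing R] [AddLeftMono R] {T : Matrix n n R} {ι : Type*} [Fintype ι]
    {P : ι → Matrix n n R} (hP : ∀ j, (P j).PosSemidef) (hP_sum : ∑ j, P j = 1) {c : ι → R}
    (hT : T = ∑ j, c j • P j) {X : Matrix n n R} (hX : X ∈ cstarConvexHull T) :
    ∃ E : ι → Matrix n n R, (∀ j, (E j).PosSemidef) ∧ ∑ j, E j = 1 ∧ X = ∑ j, c j • E j := by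
  obtain ⟨m, C, hC, rfl⟩ := hX
  refine ⟨fun j => ∑ i, star (C i) * P j * C i, fun j => ?_, ?_, ?_⟩
  · exact posSemidef_sum _ fun i _ => (hP j).conjTranspose_mul_mul_same (C i)
  · rw [Finset.sum_comm]
    simpa only [← Finset.mul_sum, ← Finset.sum_mul, hP_sum, mul_one] using hC
  · simp only [hT, Finset.mul_sum, Finset.sum_mul, Finset.smul_sum, mul_smul_comm,
      smul_mul_assoc]
    exact Finset.sum_comm

variable {𝕜 : Type*} [RCLike 𝕜] {T : Matrix n n 𝕜}

open scoped MatrixOrder in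
theorem sum_smul_mem_cstarConvexHull {ι : Type*} [Fintype ι] {E : ι → Matrix n n 𝕜}
    (hE : ∀ j, (E j).PosSemidef) (hE_sum : ∑ j, E j = 1) {c : ι → 𝕜}
    (hc : ∀ j, c j • (1 : Matrix n n 𝕜) ∈ cstarConvexHull T) :
    ∑ j, c j • E j ∈ cstarConvexHull T := by
  choose B hB using fun j => CStarAlgebra.nonneg_iff_eq_star_mul_self.mp (hE j).nonneg
  have h := sum_star_mul_mul_mem_cstarConvexHull_of_mem B _ (by simpa only [hB] using hE_sum) hc
  simpa only [mul_smul_comm, smul_mul_assoc, mul_one, ← hB] using h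

namespace IsHermitian

variable (hT : T.IsHermitian)

def eigenvectorProjection (j : n) : Matrix n n 𝕜 :=
  (hT.eigenvectorUnitary : Matrix n n 𝕜) * single j j 1 *
    star (hT.eigenvectorUnitary : Matrix n n 𝕜)

theorem posSemidef_eigenvectorProjection (j : n) : (hT.eigenvectorProjection j).PosSemidef := by
  rw [eigenvectorProjection, star_eq_conjTranspose, ← diagonal_single]
  exact (PosSemidef.diagonal (Pi.single_nonneg.mpr zero_le_one)).mul_mul_conjTranspose_same _

theorem sum_eigenvectorProjection : ∑ j, hT.eigenvectorProjection j = 1 := by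
  simpa [eigenvectorProjection] using
    (mul_diagonal_mul_eq_sum_smul (hT.eigenvectorUnitary : Matrix n n 𝕜)
      (star (hT.eigenvectorUnitary : Matrix n n 𝕜)) 1).symm

theorem eq_sum_eigenvalues_smul_eigenvectorProjection :
    T = ∑ j, (hT.eigenvalues j : 𝕜) • hT.eigenvectorProjection j := by
  conv_lhs => rw [hT.spectral_theorem, Unitary.conjStarAlgAut_apply]
  exact mul_diagonal_mul_eq_sum_smul _ _ _

theorem eigenvalues_smul_one_mem_cstarConvexHull (j : n) :
    (hT.eigenvalues j : 𝕜) • (1 : Matrix n n 𝕜) ∈ cstarConvexHull T := by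
  set U : Matrix n n 𝕜 := (hT.eigenvectorUnitary : Matrix n n 𝕜)
  have hdiag : star U * T * U = diagonal (RCLike.ofReal ∘ hT.eigenvalues) := by
    simpa [Unitary.conjStarAlgAut_star_apply] using hT.conjStarAlgAut_star_eigenvectorUnitary
  simpa [hdiag] using diag_smul_one_mem_cstarConvexHull (T := T) U j (by simp [U])

end IsHermitian

end Matrix

open Matrix

/-- The C*-convex hull of a Hermitian matrix T is the set of all
Σᵢ λᵢ Eᵢ with Eᵢ ≥ 0 and Σᵢ Eᵢ = I, where λᵢ are the eigenvalues of T. -/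
theorem cstarConvexHull_eq_eigenvalue_combinations {n : ℕ}
    (T : Matrix (Fin n) (Fin n) ℂ) (hT : T.IsHermitian) :
    {X : Matrix (Fin n) (Fin n) ℂ | ∃ (m : ℕ) (C : Fin m → Matrix (Fin n) (Fin n) ℂ),
        ∑ i, star (C i) * C i = 1 ∧ X = ∑ i, star (C i) * T * C i} =
    {X : Matrix (Fin n) (Fin n) ℂ | ∃ E : Fin n → Matrix (Fin n) (Fin n) ℂ,
        (∀ i, (E i).PosSemidef) ∧ ∑ i, E i = 1 ∧
        X = ∑ i, (hT.eigenvalues i : ℂ) • E i} := by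
  ext X
  constructor
  · exact exists_posSemidef_of_mem_cstarConvexHull hT.posSemidef_eigenvectorProjection
      hT.sum_eigenvectorProjection hT.eq_sum_eigenvalues_smul_eigenvectorProjection
  · rintro ⟨E, hE, hE_sum, rfl⟩
    exact sum_smul_mem_cstarConvexHull hE hE_sum hT.eigenvalues_smul_one_mem_cstarConvexHull

end
end

section
/- Let f : J → ℝ be continuous and T ∈ ℍₙ with eigenvalues λ₁,...,λₙ contained in J. Then the C*-convex hull of {f(T)} equals {Σᵢ₌₁ⁿ f(λᵢ)Eᵢ : Eᵢ ≥ 0, Σᵢ₌₁ⁿ Eᵢ = I}. -/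
/-!
Diagonalise `T = U diag(λ) U*`, so that `f(T) = ∑ᵢ f(λᵢ) Pᵢ` with the rank-one spectral
projections `Pᵢ = U eᵢᵢ U*`, which form a POVM. Conjugating `f(T)` by a family `(Cⱼ)` with
`∑ⱼ Cⱼ* Cⱼ = 1` gives `∑ᵢ f(λᵢ) Eᵢ` for the POVM `Eᵢ = ∑ⱼ Cⱼ* Pᵢ Cⱼ`. Conversely, writing each
`Eᵢ = Bᵢ* Bᵢ`, the `n²` matrices `C_{ik} = U eᵢₖ Bᵢ` satisfy `C_{ik}* U diag(d) U* C_{ik} =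
dᵢ Bᵢ* eₖₖ Bᵢ`, and summing over `k` and `i` recovers both `∑ C* C = 1` and `∑ᵢ f(λᵢ) Eᵢ`.
-/

noncomputable section
open scoped ComplexOrder

lemma sum_star_mul_sum_smul_mul {R A ι κ : Type*} [CommSemiring R] [Semiring A] [Star A]
    [Module R A] [IsScalarTower R A A] [SMulCommClass R A A] [Fintype ι] [Fintype κ]
    (C : κ → A) (c : ι → R) (P : ι → A) :
    ∑ j, star (C j) * (∑ i, c i • P i) * C j = ∑ i, c i • ∑ j, star (C j) * P i * C j := by
  simp only [Finset.mul_sum, Finset.sum_mul, mul_smul_comm, smul_mul_assoc, Finset.smul_sum]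
  exact Finset.sum_comm

namespace Matrix

variable {n : Type*} [Fintype n] [DecidableEq n]

lemma posSemidef_single_one {R : Type*} [CommRing R] [PartialOrder R] [StarRing R]
    [StarOrderedRing R] (i : n) : (single i i (1 : R)).PosSemidef := by
  simpa using posSemidef_conjTranspose_mul_self (single i i (1 : R))

lemma star_mul_conj_diagonal_mul_eq_smul {R : Type*} [CommSemiring R] [StarRing R]
    {U : Matrix n n R} (hU : star U * U = 1) (d : n → R) (B : Matrix n n R) (i k : n) :
    star (U * single i k 1 * B) * (U * diagonal d * star U) * (U * single i k 1 * B) =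
      d i • (star B * single k k 1 * B) := by
  have hsingle : single k i (1 : R) * diagonal d * single i k 1 = d i • single k k 1 := by
    simp [smul_single]
  calc _ = star B * (single k i 1 * (star U * U) * diagonal d * (star U * U) * single i k 1) * B :=
        by simp only [star_mul, star_eq_conjTranspose, conjTranspose_single, star_one, mul_assoc]
    _ = _ := by rw [hU, mul_one, mul_one, hsingle, mul_smul_comm, smul_mul_assoc, mul_assoc]

variable {𝕜 : Type*} [RCLike 𝕜]

def IsPOVM {ι : Type*} [Fintype ι] (E : ι → Matrix n n 𝕜) : Prop :=
  (∀ i, (E i).PosSemidef) ∧ ∑ i, E i = 1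

lemma IsPOVM.conj {ι κ : Type*} [Fintype ι] [Fintype κ] {P : ι → Matrix n n 𝕜} (hP : IsPOVM P)
    {C : κ → Matrix n n 𝕜} (hC : ∑ j, star (C j) * C j = 1) :
    IsPOVM fun i ↦ ∑ j, star (C j) * P i * C j := by
  refine ⟨fun i ↦ posSemidef_sum _ fun j _ ↦ ?_, ?_⟩
  · simpa only [star_eq_conjTranspose] using (hP.1 i).conjTranspose_mul_mul_same (C j)
  · simp_rw [Finset.sum_comm (γ := ι), ← Finset.sum_mul, ← Finset.mul_sum, hP.2, mul_one, hC]

namespace IsHermitian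

variable {A : Matrix n n 𝕜} (hA : A.IsHermitian)

def eigenProj (i : n) : Matrix n n 𝕜 :=
  (hA.eigenvectorUnitary : Matrix n n 𝕜) * single i i 1 *
    star (hA.eigenvectorUnitary : Matrix n n 𝕜)

lemma cfc_eq_sum_smul_eigenProj (f : ℝ → ℝ) :
    cfc f A = ∑ i, (f (hA.eigenvalues i) : 𝕜) • hA.eigenProj i := by
  simp only [hA.cfc_eq, IsHermitian.cfc, Unitary.conjStarAlgAut_apply, eigenProj,
    ← sum_single_eq_diagonal, Function.comp_apply, Finset.mul_sum, Finset.sum_mul]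
  refine Finset.sum_congr rfl fun i _ ↦ ?_
  rw [← smul_mul_assoc, ← mul_smul_comm, smul_single, smul_eq_mul, mul_one]

lemma isPOVM_eigenProj : IsPOVM hA.eigenProj := by
  refine ⟨fun i ↦ ?_, ?_⟩
  · simpa only [eigenProj, star_eq_conjTranspose] using
      (posSemidef_single_one i).mul_mul_conjTranspose_same (hA.eigenvectorUnitary : Matrix n n 𝕜)
  · simp only [eigenProj, ← Finset.sum_mul, ← Finset.mul_sum, sum_single_one, mul_one]
    exact Unitary.mul_star_self_of_mem (SetLike.coe_mem _)

open scoped MatrixOrder in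
lemma exists_sum_conj_cfc_eq {E : n → Matrix n n 𝕜} (hE : IsPOVM E) (f : ℝ → ℝ) :
    ∃ (m : ℕ) (C : Fin m → Matrix n n 𝕜), ∑ j, star (C j) * C j = 1 ∧
      ∑ j, star (C j) * cfc f A * C j = ∑ i, (f (hA.eigenvalues i) : 𝕜) • E i := by
  choose B hB using fun i ↦ CStarAlgebra.nonneg_iff_eq_star_mul_self.mp (hE.1 i).nonneg
  set U := (hA.eigenvectorUnitary : Matrix n n 𝕜)
  have hU : star U * U = 1 := Unitary.star_mul_self_of_mem (SetLike.coe_mem _)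
  have hU' : U * star U = 1 := Unitary.mul_star_self_of_mem (SetLike.coe_mem _)
  let C : n × n → Matrix n n 𝕜 := fun p ↦ U * single p.1 p.2 1 * B p.1
  let e := Fintype.equivFin (n × n)
  have hconj (d : n → 𝕜) : ∑ j, star (C (e.symm j)) * (U * diagonal d * star U) * C (e.symm j) =
      ∑ i, d i • E i := by
    rw [e.symm.sum_comp fun p ↦ star (C p) * (U * diagonal d * star U) * C p]
    simp only [Fintype.sum_prod_type, C, star_mul_conj_diagonal_mul_eq_smul hU, ← Finset.smul_sum,
      ← Finset.sum_mul, ← Finset.mul_sum, sum_single_one, mul_one, hB]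
  refine ⟨_, fun j ↦ C (e.symm j), ?_, ?_⟩
  · simpa only [diagonal_one, mul_one, hU', one_smul, hE.2] using hconj fun _ ↦ 1
  · rw [hA.cfc_eq]
    exact hconj _

end IsHermitian
end Matrix

theorem cstarConvexHull_cfc_eq_general {n : ℕ} (f : ℝ → ℝ)
    (T : Matrix (Fin n) (Fin n) ℂ) (hT : T.IsHermitian) :
    {X : Matrix (Fin n) (Fin n) ℂ | ∃ (m : ℕ) (C : Fin m → Matrix (Fin n) (Fin n) ℂ),
        ∑ i, star (C i) * C i = 1 ∧ X = ∑ i, star (C i) * (cfc f T) * C i} =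
    {X : Matrix (Fin n) (Fin n) ℂ | ∃ E : Fin n → Matrix (Fin n) (Fin n) ℂ,
        (∀ i, (E i).PosSemidef) ∧ ∑ i, E i = 1 ∧
        X = ∑ i, (f (hT.eigenvalues i) : ℂ) • E i} := by
  ext X
  constructor
  · rintro ⟨m, C, hC, rfl⟩
    obtain ⟨hE, hEsum⟩ := hT.isPOVM_eigenProj.conj hC
    refine ⟨_, hE, hEsum, ?_⟩
    rw [hT.cfc_eq_sum_smul_eigenProj, sum_star_mul_sum_smul_mul]
    rfl
  · rintro ⟨E, hE, hEsum, rfl⟩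
    obtain ⟨m, C, hC, hX⟩ := hT.exists_sum_conj_cfc_eq ⟨hE, hEsum⟩ f
    exact ⟨m, C, hC, hX.symm⟩

/-- For continuous f : J → ℝ and Hermitian T with eigenvalues in J, the
C*-convex hull of f(T) is {Σᵢ f(λᵢ) Eᵢ : Eᵢ ≥ 0, Σᵢ Eᵢ = I}. -/
theorem cstarConvexHull_cfc_eq {n : ℕ} (J : Set ℝ) (f : ℝ → ℝ)
    (hf : ContinuousOn f J) (T : Matrix (Fin n) (Fin n) ℂ) (hT : T.IsHermitian)
    (hev : ∀ i, hT.eigenvalues i ∈ J) :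
    {X : Matrix (Fin n) (Fin n) ℂ | ∃ (m : ℕ) (C : Fin m → Matrix (Fin n) (Fin n) ℂ),
        ∑ i, star (C i) * C i = 1 ∧ X = ∑ i, star (C i) * (cfc f T) * C i} =
    {X : Matrix (Fin n) (Fin n) ℂ | ∃ E : Fin n → Matrix (Fin n) (Fin n) ℂ,
        (∀ i, (E i).PosSemidef) ∧ ∑ i, E i = 1 ∧
        X = ∑ i, (f (hT.eigenvalues i) : ℂ) • E i} :=
  cstarConvexHull_cfc_eq_general f T hT
end
end
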